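/- arXiv:2412.17399 — 3 statements merged into one kernel-verified Lean document; each statement's English description precedes it below -/
import Mathlib

section
/- Let φ ≥ 0 and let I ⊂ ℝ be a compact interval. There exist constants 0 < C_m ≤ C_M depending only on φ and I such that for all μ ∈ I and all n ∈ ℤ \ {0}: C_m(1+|n|) ≤ |Re(ζ_n^+)| ≤ |ζ_n^+| ≤ C_M(1+|n|), and C_m(1+|n|) ≤ |Re(ζ_n^−)| ≤ |ζ_n^−| ≤ C_M(1+|n|), and C_m(1+|n|) ≤ |√(φ² + 4(inμ + n²))|. -/
/-!
With `w = φ² + 4(inμ + n²)` and `z = w^{1/2}` we have `ζ_n^± = -φ/2 ± z/2`. From `z² = w`,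
`(Re z)² = Re w + (Im z)² ≥ φ² + 4n²`, so `|Re ζ_n^±| ≥ (√(φ² + 4n²) - φ)/2 = 2n²/(√(φ² + 4n²) + φ)`,
which is of order `|n|` once `|n| ≥ 1`. For the upper bounds, `|z|² = |w| ≤ (φ + 2|n| + |μ|)²`, and `|μ|` is
bounded on the compact interval.
-/

open Complex

/-- The exponent `ζ_n^+ = -φ/2 + (1/2)√(φ² + 4(inμ + n²))` (principal square root). -/
noncomputable def zetaPlus (φ μ : ℝ) (n : ℤ) : ℂ :=
  -(φ/2 : ℂ) + (1/2) * ((φ^2 + 4*((n : ℂ) * μ * Complex.I + (n : ℂ)^2)) ^ ((1:ℂ)/2))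

/-- The exponent `ζ_n^- = -φ/2 - (1/2)√(φ² + 4(inμ + n²))` (principal square root). -/
noncomputable def zetaMinus (φ μ : ℝ) (n : ℤ) : ℂ :=
  -(φ/2 : ℂ) - (1/2) * ((φ^2 + 4*((n : ℂ) * μ * Complex.I + (n : ℂ)^2)) ^ ((1:ℂ)/2))

theorem Complex.cpow_one_half_sq (w : ℂ) : (w ^ (1 / 2 : ℂ)) ^ 2 = w := by
  simp [one_div]

theorem Complex.norm_cpow_one_half (w : ℂ) : ‖w ^ (1 / 2 : ℂ)‖ = Real.sqrt ‖w‖ := by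
  rw [Real.sqrt_eq_rpow, ← norm_cpow_real]
  norm_num

theorem Complex.sqrt_re_le_abs_re_cpow_one_half (w : ℂ) :
    Real.sqrt w.re ≤ |(w ^ (1 / 2 : ℂ)).re| := by
  have hsq : (w ^ (1 / 2 : ℂ)).re ^ 2 - (w ^ (1 / 2 : ℂ)).im ^ 2 = w.re := by
    simpa [sq, mul_re] using congrArg re (cpow_one_half_sq w)
  rw [← Real.sqrt_sq_eq_abs]
  exact Real.sqrt_le_sqrt (by nlinarith [sq_nonneg (w ^ (1 / 2 : ℂ)).im])

theorem one_add_le_sqrt_sq_add_four_mul_sq {φ N : ℝ} (hN : 1 ≤ N) :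
    1 + N ≤ Real.sqrt (φ ^ 2 + 4 * N ^ 2) :=
  Real.le_sqrt_of_sq_le (by nlinarith [sq_nonneg φ])

theorem one_add_div_le_sqrt_sq_add_four_mul_sq_sub {φ N : ℝ} (hφ : 0 ≤ φ) (hN : 1 ≤ N) :
    1 / (2 * (φ + 1)) * (1 + N) ≤ (Real.sqrt (φ ^ 2 + 4 * N ^ 2) - φ) / 2 := by
  set s := Real.sqrt (φ ^ 2 + 4 * N ^ 2)
  have hs : s ^ 2 = φ ^ 2 + 4 * N ^ 2 := Real.sq_sqrt (by positivity)
  have hs_le : s ≤ φ + 2 * N :=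
    Real.sqrt_le_iff.2 ⟨by positivity, by nlinarith [mul_nonneg hφ (by linarith : (0 : ℝ) ≤ N)]⟩
  have hs_ge : 2 * N ≤ s := Real.le_sqrt_of_sq_le (by nlinarith [sq_nonneg φ])
  rw [div_mul_eq_mul_div, one_mul, div_le_div_iff₀ (by positivity) two_pos]
  nlinarith [mul_nonneg hφ (by linarith : (0 : ℝ) ≤ N - 1)]

theorem sub_div_two_le_abs_re_neg_half_add_half_mul {φ : ℝ} (hφ : 0 ≤ φ) (z : ℂ) :
    (|z.re| - φ) / 2 ≤ |(-(φ / 2 : ℂ) + 1 / 2 * z).re| := by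
  have hre : (-(φ / 2 : ℂ) + 1 / 2 * z).re = (z.re - φ) / 2 := by
    simp [field, sub_eq_neg_add]
  rw [hre, abs_div, abs_two]
  gcongr
  simpa [abs_of_nonneg hφ] using abs_sub_abs_le_abs_sub z.re φ

theorem norm_neg_half_add_half_mul_le {φ : ℝ} (hφ : 0 ≤ φ) (z : ℂ) :
    ‖-(φ / 2 : ℂ) + 1 / 2 * z‖ ≤ (φ + ‖z‖) / 2 := by
  refine (norm_add_le _ _).trans (le_of_eq ?_)
  simp [abs_of_nonneg hφ, field]

theorem neg_half_add_half_mul_bounds {φ N M : ℝ} (hφ : 0 ≤ φ) (hN : 1 ≤ N) (hM : 0 ≤ M) {z : ℂ}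
    (hre : Real.sqrt (φ ^ 2 + 4 * N ^ 2) ≤ |z.re|) (hnorm : ‖z‖ ≤ φ + 2 * N + M) :
    1 / (2 * (φ + 1)) * (1 + N) ≤ |(-(φ / 2 : ℂ) + 1 / 2 * z).re| ∧
      |(-(φ / 2 : ℂ) + 1 / 2 * z).re| ≤ ‖-(φ / 2 : ℂ) + 1 / 2 * z‖ ∧
      ‖-(φ / 2 : ℂ) + 1 / 2 * z‖ ≤ (φ + M + 1) * (1 + N) := by
  refine ⟨?_, abs_re_le_norm _, ?_⟩
  · calc 1 / (2 * (φ + 1)) * (1 + N) ≤ (Real.sqrt (φ ^ 2 + 4 * N ^ 2) - φ) / 2 :=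
          one_add_div_le_sqrt_sq_add_four_mul_sq_sub hφ hN
      _ ≤ (|z.re| - φ) / 2 := by gcongr
      _ ≤ _ := sub_div_two_le_abs_re_neg_half_add_half_mul hφ z
  · calc ‖-(φ / 2 : ℂ) + 1 / 2 * z‖ ≤ (φ + ‖z‖) / 2 := norm_neg_half_add_half_mul_le hφ z
      _ ≤ (φ + M + 1) * (1 + N) := by nlinarith

noncomputable def zetaDisc (φ μ : ℝ) (n : ℤ) : ℂ :=
  φ ^ 2 + 4 * ((n : ℂ) * μ * I + (n : ℂ) ^ 2)

theorem re_zetaDisc (φ μ : ℝ) (n : ℤ) : (zetaDisc φ μ n).re = φ ^ 2 + 4 * |(n : ℝ)| ^ 2 := by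
  simp [zetaDisc, sq]

theorem norm_zetaDisc_le {φ : ℝ} (hφ : 0 ≤ φ) (μ : ℝ) (n : ℤ) :
    ‖zetaDisc φ μ n‖ ≤ (φ + 2 * |(n : ℝ)| + |μ|) ^ 2 := by
  have him : (zetaDisc φ μ n).im = 4 * n * μ := by simp [zetaDisc, sq, mul_assoc]
  calc ‖zetaDisc φ μ n‖ ≤ |(zetaDisc φ μ n).re| + |(zetaDisc φ μ n).im| :=
        norm_le_abs_re_add_abs_im _
    _ = φ ^ 2 + 4 * |(n : ℝ)| ^ 2 + 4 * |(n : ℝ)| * |μ| := by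
        rw [re_zetaDisc, him, abs_of_nonneg (by positivity), abs_mul, abs_mul,
          abs_of_pos (four_pos : (0 : ℝ) < 4)]
    _ ≤ (φ + 2 * |(n : ℝ)| + |μ|) ^ 2 := by
        nlinarith [mul_nonneg hφ (abs_nonneg (n : ℝ)), mul_nonneg hφ (abs_nonneg μ), sq_nonneg |μ|]

theorem zetaMinus_eq (φ μ : ℝ) (n : ℤ) :
    zetaMinus φ μ n = -(φ / 2 : ℂ) + 1 / 2 * -zetaDisc φ μ n ^ (1 / 2 : ℂ) := by
  rw [zetaMinus, zetaDisc]
  ring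

theorem zeta_bounds_general (φ : ℝ) (hφ : 0 ≤ φ) (a b : ℝ) :
    ∃ Cm CM : ℝ, 0 < Cm ∧ Cm ≤ CM ∧
      ∀ μ ∈ Set.Icc a b, ∀ n : ℤ, n ≠ 0 →
        (Cm * (1 + |(n:ℝ)|) ≤ |(zetaPlus φ μ n).re| ∧
          |(zetaPlus φ μ n).re| ≤ ‖zetaPlus φ μ n‖ ∧
          ‖zetaPlus φ μ n‖ ≤ CM * (1 + |(n:ℝ)|)) ∧
        (Cm * (1 + |(n:ℝ)|) ≤ |(zetaMinus φ μ n).re| ∧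
          |(zetaMinus φ μ n).re| ≤ ‖zetaMinus φ μ n‖ ∧
          ‖zetaMinus φ μ n‖ ≤ CM * (1 + |(n:ℝ)|)) ∧
        Cm * (1 + |(n:ℝ)|) ≤
          ‖(φ^2 + 4*((n : ℂ) * μ * Complex.I + (n : ℂ)^2)) ^ ((1:ℂ)/2)‖ := by
  have hM : 0 ≤ |a| + |b| := by positivity
  have hCm : 1 / (2 * (φ + 1)) ≤ 1 := by rw [div_le_one (by positivity)]; linarith
  refine ⟨1 / (2 * (φ + 1)), φ + (|a| + |b|) + 1, by positivity, by linarith, ?_⟩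
  intro μ hμ n hn
  have hN : 1 ≤ |(n : ℝ)| := by exact_mod_cast Int.one_le_abs hn
  have hμM : |μ| ≤ |a| + |b| :=
    abs_le.2 ⟨by linarith [neg_abs_le a, abs_nonneg b, hμ.1],
      by linarith [le_abs_self b, abs_nonneg a, hμ.2]⟩
  have hre : Real.sqrt (φ ^ 2 + 4 * |(n : ℝ)| ^ 2) ≤ |(zetaDisc φ μ n ^ (1 / 2 : ℂ)).re| := by
    simpa only [re_zetaDisc] using sqrt_re_le_abs_re_cpow_one_half (zetaDisc φ μ n)
  have hnorm : ‖zetaDisc φ μ n ^ (1 / 2 : ℂ)‖ ≤ φ + 2 * |(n : ℝ)| + (|a| + |b|) := by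
    rw [norm_cpow_one_half, Real.sqrt_le_left (by positivity)]
    exact (norm_zetaDisc_le hφ μ n).trans (by gcongr)
  refine ⟨neg_half_add_half_mul_bounds hφ hN hM hre hnorm, ?_, ?_⟩
  · rw [zetaMinus_eq]
    exact neg_half_add_half_mul_bounds hφ hN hM (by rwa [neg_re, abs_neg]) (by rwa [norm_neg])
  · calc 1 / (2 * (φ + 1)) * (1 + |(n : ℝ)|) ≤ 1 + |(n : ℝ)| := by
          nlinarith
      _ ≤ Real.sqrt (φ ^ 2 + 4 * |(n : ℝ)| ^ 2) := one_add_le_sqrt_sq_add_four_mul_sq hN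
      _ ≤ |(zetaDisc φ μ n ^ (1 / 2 : ℂ)).re| := hre
      _ ≤ ‖zetaDisc φ μ n ^ (1 / 2 : ℂ)‖ := abs_re_le_norm _

/-- Uniform two-sided bounds, of order `1 + |n|`, for the exponents `ζ_n^±`
when `μ` ranges over a compact interval. -/
theorem zeta_bounds (φ : ℝ) (hφ : 0 ≤ φ) (a b : ℝ) (hab : a ≤ b) :
    ∃ Cm CM : ℝ, 0 < Cm ∧ Cm ≤ CM ∧
      ∀ μ ∈ Set.Icc a b, ∀ n : ℤ, n ≠ 0 →
        (Cm * (1 + |(n:ℝ)|) ≤ |(zetaPlus φ μ n).re| ∧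
          |(zetaPlus φ μ n).re| ≤ ‖zetaPlus φ μ n‖ ∧
          ‖zetaPlus φ μ n‖ ≤ CM * (1 + |(n:ℝ)|)) ∧
        (Cm * (1 + |(n:ℝ)|) ≤ |(zetaMinus φ μ n).re| ∧
          |(zetaMinus φ μ n).re| ≤ ‖zetaMinus φ μ n‖ ∧
          ‖zetaMinus φ μ n‖ ≤ CM * (1 + |(n:ℝ)|)) ∧
        Cm * (1 + |(n:ℝ)|) ≤
          ‖(φ^2 + 4*((n : ℂ) * μ * Complex.I + (n : ℂ)^2)) ^ ((1:ℂ)/2)‖ :=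
  zeta_bounds_general φ hφ a b
end

section
/- Let α ∈ (3, min(2φ−1, 2β₀+3)) with φ > 2 and β₀ > 0. Suppose F⁰ ∈ C([1,∞)), F¹ ∈ C¹([1,∞)) satisfy lim_{r→∞} r^{3+2β₀}|F⁰(r)| = 0 and lim_{r→∞} r^{2+2β₀}|F¹(r)| = 0, and w ∈ C²([1,∞)) solves (1/r^{φ+1}) d/dr[r^{φ+1} w'] + (φ−1)/r² · w = F⁰ + dF¹/dr on (1,∞) with w(1) = 0 and sup_{r>1} r^{β₀+1}|w(r)| + sup_{r>1} r^{β₀+2}|w'(r)| < ∞. Then ∫₁^∞ r^α |w'(r)|² dr + ∫₁^∞ |w(r)|²/r² · r^α dr ≤ C_α ∫₁^∞ (|F⁰(r)|² r² + |F¹(r)|²) r^α dr, where C_α depends only on α and φ. -/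
/-!
Multiplying the equation by `r^α w` and adding `(α - 1)/2` times the Hardy identity for
`(r^(α-1) w²)'` gives, for the flux `Ψ = r^α (w w' + (φ/2) w²/r - w F¹)`,
`Ψ' = r^α (Q(w/r, w') + (w/r)(r F⁰) - α (w/r) F¹ - w' F¹)` with
`Q(a, y) = y² + (α - 1) a y + (φ (α - 3)/2 + 1) a²`. The form `Q` is positive definite since its
discriminant condition reads `(α - 3)(2φ - 1 - α) > 0`. `Ψ` vanishes at `r = 1` since `w 1 = 0`,
and at infinity since `Ψ = O(r^(α - 2β₀ - 3))`. Hence `∫ Ψ' = 0`, and the coercivity of `Q`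
together with Young's inequality on the terms linear in `(w/r, w')` gives the estimate.
-/

open MeasureTheory Set Filter Asymptotics Topology

def DecaysAtRate (u : ℝ → ℝ) (p : ℝ) : Prop :=
  ContinuousOn u (Ici 1) ∧ u =O[atTop] fun r => r ^ p

lemma decaysAtRate_rpow (p : ℝ) : DecaysAtRate (fun r => r ^ p) p :=
  ⟨fun r hr => (Real.continuousAt_rpow_const r p
    (Or.inl (by linarith [mem_Ici.1 hr]))).continuousWithinAt, isBigO_refl _ _⟩

lemma decaysAtRate_id : DecaysAtRate (fun r => r) 1 :=
  ⟨continuousOn_id, (isBigO_refl _ _).congr_right fun r => (Real.rpow_one r).symm⟩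

lemma decaysAtRate_inv : DecaysAtRate (fun r => r⁻¹) (-1) :=
  ⟨continuousOn_inv₀.mono fun _ hr => (zero_lt_one.trans_le hr).ne',
    (isBigO_refl _ _).congr_right fun r => (Real.rpow_neg_one r).symm⟩

namespace DecaysAtRate

variable {u v : ℝ → ℝ} {p q s : ℝ}

lemma of_eventually_rpow_mul_abs_le {K : ℝ} (hu : ContinuousOn u (Ici 1))
    (h : ∀ᶠ r in atTop, r ^ p * |u r| ≤ K) : DecaysAtRate u (-p) := by
  refine ⟨hu, IsBigO.of_bound K ?_⟩
  filter_upwards [h, eventually_gt_atTop 0] with r hr hr0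
  have hrp : 0 < r ^ p := Real.rpow_pos_of_pos hr0 p
  rw [Real.norm_eq_abs, Real.norm_eq_abs, abs_of_pos (Real.rpow_pos_of_pos hr0 _),
    Real.rpow_neg hr0.le, ← div_eq_mul_inv, le_div_iff₀ hrp]
  linarith

lemma of_rpow_mul_abs_add_rpow_mul_abs_le {K : ℝ} (hu : ContinuousOn u (Ici 1))
    (hv : ContinuousOn v (Ici 1)) (h : ∀ r : ℝ, 1 < r → r ^ p * |u r| + r ^ q * |v r| ≤ K) :
    DecaysAtRate u (-p) ∧ DecaysAtRate v (-q) := by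
  refine ⟨of_eventually_rpow_mul_abs_le (K := K) hu ?_,
    of_eventually_rpow_mul_abs_le (K := K) hv ?_⟩ <;>
  · filter_upwards [eventually_gt_atTop 1] with r hr
    have hu0 : 0 ≤ r ^ p * |u r| := by positivity
    have hv0 : 0 ≤ r ^ q * |v r| := by positivity
    linarith [h r hr]

lemma mono (hu : DecaysAtRate u p) (h : p ≤ q) : DecaysAtRate u q := by
  refine ⟨hu.1, hu.2.trans (Eventually.isBigO ?_)⟩
  filter_upwards [eventually_ge_atTop 1] with r hr
  rw [Real.norm_of_nonneg (Real.rpow_nonneg (by linarith) p)]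
  exact Real.rpow_le_rpow_of_exponent_le hr h

lemma mul (hu : DecaysAtRate u p) (hv : DecaysAtRate v q) (h : p + q ≤ s) :
    DecaysAtRate (fun r => u r * v r) s :=
  ⟨hu.1.mul hv.1, hu.2.mul_atTop_rpow_of_isBigO_rpow p q s hv.2 h⟩

lemma pow_two (hu : DecaysAtRate u p) : DecaysAtRate (fun r => u r ^ 2) (2 * p) := by
  simpa only [sq] using hu.mul hu (two_mul p).ge

lemma const_mul (hu : DecaysAtRate u p) (c : ℝ) : DecaysAtRate (fun r => c * u r) p :=
  ⟨continuousOn_const.mul hu.1, hu.2.const_mul_left c⟩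

lemma add (hu : DecaysAtRate u p) (hv : DecaysAtRate v p) :
    DecaysAtRate (fun r => u r + v r) p :=
  ⟨hu.1.add hv.1, hu.2.add hv.2⟩

lemma sub (hu : DecaysAtRate u p) (hv : DecaysAtRate v p) :
    DecaysAtRate (fun r => u r - v r) p :=
  ⟨hu.1.sub hv.1, hu.2.sub hv.2⟩

lemma integrableOn (hu : DecaysAtRate u p) (hp : p < -1) : IntegrableOn u (Ioi 1) :=
  ((hu.1.locallyIntegrableOn measurableSet_Ici).integrableOn_of_isBigO_atTop hu.2
    (integrableAtFilter_rpow_atTop_iff.2 hp)).mono_set Ioi_subset_Ici_self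

lemma tendsto_zero (hu : DecaysAtRate u p) (hp : p < 0) : Tendsto u atTop (𝓝 0) :=
  hu.2.trans_tendsto (by simpa using tendsto_rpow_neg_atTop (neg_pos.2 hp))

end DecaysAtRate

lemma mul_integral_Ioi_le_of_sub_le_deriv {Ψ ψ X Y : ℝ → ℝ} {a κ C : ℝ}
    (hX : IntegrableOn X (Ioi a)) (hY : IntegrableOn Y (Ioi a)) (hψ : IntegrableOn ψ (Ioi a))
    (hcont : ContinuousWithinAt Ψ (Ici a) a) (hΨ : ∀ r ∈ Ioi a, HasDerivAt Ψ (ψ r) r)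
    (hΨa : Ψ a = 0) (hΨlim : Tendsto Ψ atTop (𝓝 0)) (hle : ∀ r ∈ Ioi a, κ * X r - C * Y r ≤ ψ r) :
    κ * ∫ r in Ioi a, X r ≤ C * ∫ r in Ioi a, Y r := by
  have hκX := hX.const_mul κ
  have hCY := hY.const_mul C
  have hmono := setIntegral_mono_on (f := fun r => κ * X r - C * Y r) (hκX.sub hCY) hψ
    measurableSet_Ioi hle
  rw [integral_sub hκX hCY, integral_const_mul, integral_const_mul,
    integral_Ioi_of_hasDerivAt_of_tendsto hcont hΨ hψ hΨlim, hΨa, sub_zero] at hmono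
  linarith

lemma quadratic_form_coercive {c e : ℝ} (hce : c ^ 2 < 4 * e) (a y : ℝ) :
    (4 * e - c ^ 2) / (4 * (1 + e)) * (a ^ 2 + y ^ 2) ≤ y ^ 2 + c * a * y + e * a ^ 2 := by
  have he : 0 < 1 + e := by nlinarith [sq_nonneg c]
  have hc : 0 < 4 + c ^ 2 := by positivity
  rw [div_mul_eq_mul_div, div_le_iff₀ (by positivity)]
  -- `(4 + c²) · (difference) = ((4 + c²) y + 2c(1 + e) a)² + ((4e - c²) a)²`
  nlinarith [sq_nonneg ((4 + c ^ 2) * y + 2 * c * (1 + e) * a), sq_nonneg ((4 * e - c ^ 2) * a)]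

lemma mul_add_mul_sub_mul_le {m ε : ℝ} (hε : 0 < ε) (a y g f : ℝ) :
    m * a * f + y * f - a * g ≤ ε * (a ^ 2 + y ^ 2) + (m ^ 2 + 1) / ε * (g ^ 2 + f ^ 2) := by
  rw [div_mul_eq_mul_div, ← mul_le_mul_iff_of_pos_left hε, mul_add ε, mul_div_cancel₀ _ hε.ne']
  nlinarith [sq_nonneg (ε * a - m * f), sq_nonneg (ε * y - f / 2), sq_nonneg (ε * a + g)]

theorem weighted_energy_le_of_flux {α c e m κ p : ℝ} (hκ : 0 < κ)
    (hQ : ∀ a y : ℝ, κ * (a ^ 2 + y ^ 2) ≤ y ^ 2 + c * a * y + e * a ^ 2)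
    (hp : α + 2 * p < -1) {a y g f Ψ : ℝ → ℝ} (ha : DecaysAtRate a p) (hy : DecaysAtRate y p)
    (hg : DecaysAtRate g p) (hf : DecaysAtRate f p)
    (hΨdec : DecaysAtRate Ψ (α + 2 * p + 1)) (hΨ1 : Ψ 1 = 0)
    (hΨ' : ∀ r ∈ Ioi 1, HasDerivAt Ψ (r ^ α * (y r ^ 2 + c * a r * y r + e * a r ^ 2
      + a r * g r - m * a r * f r - y r * f r)) r) :
    (∫ r in Ioi 1, r ^ α * y r ^ 2) + (∫ r in Ioi 1, r ^ α * a r ^ 2)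
      ≤ 4 * (m ^ 2 + 1) / κ ^ 2 * ∫ r in Ioi 1, r ^ α * (g r ^ 2 + f r ^ 2) := by
  have hint {u : ℝ → ℝ} (hu : DecaysAtRate u (2 * p)) :
      IntegrableOn (fun r => r ^ α * u r) (Ioi 1) :=
    ((decaysAtRate_rpow α).mul hu le_rfl).integrableOn hp
  have hpp : p + p ≤ 2 * p := (two_mul p).ge
  have hI := hint hy.pow_two
  have hJ := hint ha.pow_two
  have hdensity := hint <| ((((hy.pow_two.add ((ha.const_mul c).mul hy hpp)).add
    (ha.pow_two.const_mul e)).add (ha.mul hg hpp)).sub ((ha.const_mul m).mul hf hpp)).sub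
    (hy.mul hf hpp)
  have hκ2 : 0 < κ / 2 := half_pos hκ
  have key := mul_integral_Ioi_le_of_sub_le_deriv (κ := κ / 2) (C := (m ^ 2 + 1) / (κ / 2))
    (X := fun r => r ^ α * y r ^ 2 + r ^ α * a r ^ 2) (hI.add hJ)
    (hint (hg.pow_two.add hf.pow_two)) hdensity (hΨdec.1 1 self_mem_Ici) hΨ' hΨ1
    (hΨdec.tendsto_zero (by linarith)) fun r hr => by
      have hQr := hQ (a r) (y r)
      have hyoung := mul_add_mul_sub_mul_le (m := m) hκ2 (a r) (y r) (g r) (f r)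
      have hrα : 0 ≤ r ^ α := Real.rpow_nonneg (zero_le_one.trans (le_of_lt hr)) α
      nlinarith
  rw [← integral_add hI hJ]
  calc _ = 2 / κ * (κ / 2 * ∫ r in Ioi 1, r ^ α * y r ^ 2 + r ^ α * a r ^ 2) := by
        field_simp
    _ ≤ 2 / κ * ((m ^ 2 + 1) / (κ / 2) * ∫ r in Ioi 1, r ^ α * (g r ^ 2 + f r ^ 2)) := by
        gcongr
    _ = _ := by field_simp; ring

lemma hasDerivAt_zeroModeFlux {φ α r : ℝ} {F0 F1 F1' w w' w'' : ℝ → ℝ} (hr : 0 < r)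
    (hw : HasDerivAt w (w' r) r) (hw' : HasDerivAt w' (w'' r) r)
    (hF1 : HasDerivAt F1 (F1' r) r)
    (ode : w'' r + (φ + 1) / r * w' r + (φ - 1) / r ^ 2 * w r = F0 r + F1' r) :
    HasDerivAt (fun s => s ^ α * (w s * w' s + φ / 2 * (w s ^ 2 * s⁻¹) - w s * F1 s))
      (r ^ α * (w' r ^ 2 + (α - 1) * (w r * r⁻¹) * w' r
        + (φ * (α - 3) / 2 + 1) * (w r * r⁻¹) ^ 2 + w r * r⁻¹ * (r * F0 r)
        - α * (w r * r⁻¹) * F1 r - w' r * F1 r)) r := by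
  have hflux := (Real.hasDerivAt_rpow_const (p := α) (Or.inl hr.ne')).mul
    (((hw.mul hw').add (((hw.pow 2).mul (hasDerivAt_inv hr.ne')).const_mul (φ / 2))).sub
      (hw.mul hF1))
  refine hflux.congr_deriv ?_
  simp only [Pi.mul_apply, Pi.add_apply, Pi.sub_apply, Pi.pow_apply]
  rw [Real.rpow_sub_one hr.ne', show w'' r = F0 r + F1' r - (φ + 1) / r * w' r
    - (φ - 1) / r ^ 2 * w r by linarith]
  field_simp
  ring

theorem zero_mode_weighted_estimate_general
    (φ α : ℝ) (hα1 : 3 < α) (hα2 : α < 2 * φ - 1) :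
    ∃ C : ℝ, 0 < C ∧
      ∀ β₀ : ℝ, 0 < β₀ → α < 2 * β₀ + 3 →
      ∀ F0 F1 F1' w w' w'' : ℝ → ℝ,
        ContinuousOn F0 (Set.Ici 1) →
        (∀ r ∈ Set.Ici (1:ℝ), HasDerivAt F1 (F1' r) r) →
        ContinuousOn F1' (Set.Ici 1) →
        Filter.Tendsto (fun r => r ^ (3 + 2*β₀) * |F0 r|) Filter.atTop (nhds 0) →
        Filter.Tendsto (fun r => r ^ (2 + 2*β₀) * |F1 r|) Filter.atTop (nhds 0) →
        (∀ r ∈ Set.Ici (1:ℝ), HasDerivAt w (w' r) r) →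
        (∀ r ∈ Set.Ici (1:ℝ), HasDerivAt w' (w'' r) r) →
        ContinuousOn w'' (Set.Ici 1) →
        (∀ r : ℝ, 1 < r →
          w'' r + (φ + 1)/r * w' r + (φ - 1)/r^2 * w r = F0 r + F1' r) →
        w 1 = 0 →
        (∃ K : ℝ, ∀ r : ℝ, 1 < r →
          r ^ (β₀ + 1) * |w r| + r ^ (β₀ + 2) * |w' r| ≤ K) →
        (∫ r in Set.Ioi (1:ℝ), r ^ α * (w' r)^2)
          + (∫ r in Set.Ioi (1:ℝ), (w r)^2 / r^2 * r ^ α)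
          ≤ C * ∫ r in Set.Ioi (1:ℝ), ((F0 r)^2 * r^2 + (F1 r)^2) * r ^ α := by
  obtain ⟨κ, hκ, hQ⟩ : ∃ κ > 0, ∀ a y : ℝ,
      κ * (a ^ 2 + y ^ 2) ≤ y ^ 2 + (α - 1) * a * y + (φ * (α - 3) / 2 + 1) * a ^ 2 := by
    have hce : (α - 1) ^ 2 < 4 * (φ * (α - 3) / 2 + 1) := by nlinarith
    exact ⟨_, div_pos (by linarith) (by nlinarith), quadratic_form_coercive hce⟩
  refine ⟨4 * (α ^ 2 + 1) / κ ^ 2, by positivity, ?_⟩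
  intro β₀ hβ₀ hαβ F0 F1 F1' w w' w'' hF0 hF1 _ hF0lim hF1lim hw hw' _ ode hw1 ⟨K, hK⟩
  obtain ⟨hwdec, hw'dec⟩ := DecaysAtRate.of_rpow_mul_abs_add_rpow_mul_abs_le
    (HasDerivAt.continuousOn hw) (HasDerivAt.continuousOn hw') hK
  have hF0dec := DecaysAtRate.of_eventually_rpow_mul_abs_le hF0
    (hF0lim.eventually (eventually_le_nhds one_pos))
  have hF1dec := DecaysAtRate.of_eventually_rpow_mul_abs_le (HasDerivAt.continuousOn hF1)
    (hF1lim.eventually (eventually_le_nhds one_pos))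
  have hflux := (decaysAtRate_rpow α).mul (((hwdec.mul hw'dec le_rfl).add
    ((hwdec.pow_two.mul decaysAtRate_inv (by linarith)).const_mul (φ / 2))).sub
    (hwdec.mul hF1dec (by linarith))) le_rfl
  have key := weighted_energy_le_of_flux (m := α) (p := -(β₀ + 2)) hκ hQ (by linarith)
    (hwdec.mul decaysAtRate_inv (by linarith)) hw'dec (decaysAtRate_id.mul hF0dec (by linarith))
    (hF1dec.mono (by linarith)) (hflux.mono (by linarith)) (by simp [hw1])
    fun r hr => hasDerivAt_zeroModeFlux (zero_lt_one.trans hr) (hw r (Ioi_subset_Ici_self hr))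
      (hw' r (Ioi_subset_Ici_self hr)) (hF1 r (Ioi_subset_Ici_self hr)) (ode r hr)
  convert key using 3
  all_goals funext r; ring

/-- Weighted energy estimate for the zero-mode linearized equation
`w'' + ((φ+1)/r) w' + ((φ-1)/r²) w = F⁰ + (F¹)'` on `(1,∞)`. -/
theorem zero_mode_weighted_estimate
    (φ α : ℝ) (hφ : 2 < φ) (hα1 : 3 < α) (hα2 : α < 2 * φ - 1) :
    ∃ C : ℝ, 0 < C ∧
      ∀ β₀ : ℝ, 0 < β₀ → α < 2 * β₀ + 3 →
      ∀ F0 F1 F1' w w' w'' : ℝ → ℝ,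
        ContinuousOn F0 (Set.Ici 1) →
        (∀ r ∈ Set.Ici (1:ℝ), HasDerivAt F1 (F1' r) r) →
        ContinuousOn F1' (Set.Ici 1) →
        Filter.Tendsto (fun r => r ^ (3 + 2*β₀) * |F0 r|) Filter.atTop (nhds 0) →
        Filter.Tendsto (fun r => r ^ (2 + 2*β₀) * |F1 r|) Filter.atTop (nhds 0) →
        (∀ r ∈ Set.Ici (1:ℝ), HasDerivAt w (w' r) r) →
        (∀ r ∈ Set.Ici (1:ℝ), HasDerivAt w' (w'' r) r) →
        ContinuousOn w'' (Set.Ici 1) →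
        (∀ r : ℝ, 1 < r →
          w'' r + (φ + 1)/r * w' r + (φ - 1)/r^2 * w r = F0 r + F1' r) →
        w 1 = 0 →
        (∃ K : ℝ, ∀ r : ℝ, 1 < r →
          r ^ (β₀ + 1) * |w r| + r ^ (β₀ + 2) * |w' r| ≤ K) →
        (∫ r in Set.Ioi (1:ℝ), r ^ α * (w' r)^2)
          + (∫ r in Set.Ioi (1:ℝ), (w r)^2 / r^2 * r ^ α)
          ≤ C * ∫ r in Set.Ioi (1:ℝ), ((F0 r)^2 * r^2 + (F1 r)^2) * r ^ α :=
  zero_mode_weighted_estimate_general φ α hα1 hα2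
end

section
/- Let κ > 0 and α > 0. The bilinear map NL taking two pairs of Fourier-coefficient sequences ((γᵃ_n), (wᵃ_n)) and ((γᵇ_n), (wᵇ_n)), with sup_n sup_{r≥1} r^{α+l}(1+|n|)^{κ+4−l}|∂_r^l γ_n| < ∞ and sup_n sup_{r≥1} r^{α+2+l}(1+|n|)^{κ+2−l}|∂_r^l w_n| < ∞ for l = 0,1,2, to the sequence F_n(r) = (i/r) Σ_{k+l=n} (l γᵃ_l(r) ∂_r wᵇ_k(r) − ∂_r γᵃ_l(r) k wᵇ_k(r)), is well-defined and continuous into the space of sequences with sup_n sup_{r≥1} r^{4+2α}(1+|n|)^{κ+1}|F_n(r)| < ∞. -/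
open Complex

/-!
Write `⟨x⟩ = 1 + |x|`. By `⟨n⟩ ≤ ⟨l⟩⟨n - l⟩` the output weight `⟨n⟩^(κ+1)` is shared between the
two factors of each summand; the factor `l` costs one power of `⟨l⟩` and `n - l` one power of
`⟨n - l⟩`, which still leaves a spare `⟨l⟩^2` of decay from `γ`. So every summand is at most
`2 Ka Kb r^(-(2α+3)) ⟨n⟩^(-(κ+1)) ⟨l⟩^(-2)`, which is summable in `l`, and the prefactor `i / r`
supplies the last power of `r`.
-/

theorem summable_one_add_abs_int_rpow_neg {b : ℝ} (hb : 1 < b) :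
    Summable fun n : ℤ => (1 + |(n : ℝ)|) ^ (-b) := by
  refine (Real.summable_abs_int_rpow hb).of_norm_bounded_eventually ?_
  filter_upwards [Set.Finite.compl_mem_cofinite (Set.finite_singleton (0 : ℤ))] with n hn
  have hn : 0 < |(n : ℝ)| := abs_pos.mpr (Int.cast_ne_zero.mpr hn)
  rw [Real.norm_of_nonneg (by positivity)]
  exact Real.rpow_le_rpow_of_nonpos hn (by linarith) (by linarith)

theorem one_add_norm_add_rpow_le {E : Type*} [SeminormedAddGroup E] (x y : E) {s : ℝ}
    (hs : 0 ≤ s) : (1 + ‖x + y‖) ^ s ≤ (1 + ‖x‖) ^ s * (1 + ‖y‖) ^ s := by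
  rw [← Real.mul_rpow (by positivity) (by positivity)]
  refine Real.rpow_le_rpow (by positivity) ?_ hs
  nlinarith [norm_add_le x y, norm_nonneg x, norm_nonneg y]

theorem norm_nonlinearity_summand_le {κ α r Ka Kb : ℝ} (hκ : 0 ≤ κ + 1) (hr : 0 < r) {l k : ℤ}
    {g g' w w' : ℂ}
    (hg : r ^ α * (1 + |(l : ℝ)|) ^ (κ + 4) * ‖g‖ ≤ Ka)
    (hg' : r ^ (α + 1) * (1 + |(l : ℝ)|) ^ (κ + 3) * ‖g'‖ ≤ Ka)
    (hw : r ^ (α + 2) * (1 + |(k : ℝ)|) ^ (κ + 2) * ‖w‖ ≤ Kb)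
    (hw' : r ^ (α + 3) * (1 + |(k : ℝ)|) ^ (κ + 1) * ‖w'‖ ≤ Kb) :
    ‖(l : ℂ) * g * w' - g' * (k : ℂ) * w‖ ≤
      2 * Ka * Kb / (r ^ (2 * α + 3) * (1 + |((l + k : ℤ) : ℝ)|) ^ (κ + 1)) *
        (1 + |(l : ℝ)|) ^ (-2 : ℝ) := by
  set X := 1 + |(l : ℝ)|
  set Y := 1 + |(k : ℝ)|
  set N := 1 + |((l + k : ℤ) : ℝ)|
  have hX : 0 < X := by positivity
  have hY : 0 < Y := by positivity
  have hKa : 0 ≤ Ka := le_trans (by positivity) hg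
  have hN : N ^ (κ + 1) ≤ X ^ (κ + 1) * Y ^ (κ + 1) := by
    simpa only [Int.norm_eq_abs] using one_add_norm_add_rpow_le l k hκ
  have first : r ^ (2 * α + 3) * N ^ (κ + 1) * X ^ 2 * ‖(l : ℂ) * g * w'‖ ≤ Ka * Kb := by
    rw [norm_mul, norm_mul, norm_intCast]
    calc _ ≤ r ^ (2 * α + 3) * (X ^ (κ + 1) * Y ^ (κ + 1)) * X ^ 2 * (X * ‖g‖ * ‖w'‖) := by
          gcongr; exact le_add_of_nonneg_left zero_le_one
      _ = (r ^ α * X ^ (κ + 4) * ‖g‖) * (r ^ (α + 3) * Y ^ (κ + 1) * ‖w'‖) := by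
          rw [show 2 * α + 3 = α + (α + 3) by ring, Real.rpow_add hr,
            show κ + 4 = κ + 1 + 3 by ring, Real.rpow_add hX (κ + 1) 3, Real.rpow_ofNat]
          ring
      _ ≤ Ka * Kb := mul_le_mul hg hw' (by positivity) hKa
  have second : r ^ (2 * α + 3) * N ^ (κ + 1) * X ^ 2 * ‖g' * (k : ℂ) * w‖ ≤ Ka * Kb := by
    rw [norm_mul, norm_mul, norm_intCast]
    calc _ ≤ r ^ (2 * α + 3) * (X ^ (κ + 1) * Y ^ (κ + 1)) * X ^ 2 * (‖g'‖ * Y * ‖w‖) := by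
          gcongr; exact le_add_of_nonneg_left zero_le_one
      _ = (r ^ (α + 1) * X ^ (κ + 3) * ‖g'‖) * (r ^ (α + 2) * Y ^ (κ + 2) * ‖w‖) := by
          rw [show 2 * α + 3 = α + 1 + (α + 2) by ring, Real.rpow_add hr,
            show κ + 3 = κ + 1 + 2 by ring, Real.rpow_add hX (κ + 1) 2, Real.rpow_ofNat,
            show κ + 2 = κ + 1 + 1 by ring, Real.rpow_add_one hY.ne' (κ + 1)]
          ring
      _ ≤ Ka * Kb := mul_le_mul hg' hw (by positivity) hKa
  rw [Real.rpow_neg hX.le, Real.rpow_ofNat, ← div_eq_mul_inv, div_div,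
    le_div_iff₀ (by positivity), mul_comm]
  calc _ ≤ r ^ (2 * α + 3) * N ^ (κ + 1) * X ^ 2 * (‖(l : ℂ) * g * w'‖ + ‖g' * (k : ℂ) * w‖) := by
        gcongr; exact norm_sub_le _ _
    _ ≤ 2 * Ka * Kb := by linarith

theorem nonlinearity_bilinear_estimate_general (κ α : ℝ) (hκ : 0 < κ) :
    ∃ C : ℝ, 0 < C ∧
      ∀ γa γa' wb wb' : ℤ → ℝ → ℂ, ∀ Ka Kb : ℝ,
        (∀ l : ℤ, ∀ r : ℝ, 1 ≤ r →
          r ^ α * (1 + |(l:ℝ)|) ^ (κ + 4) * ‖γa l r‖ ≤ Ka) →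
        (∀ l : ℤ, ∀ r : ℝ, 1 ≤ r →
          r ^ (α + 1) * (1 + |(l:ℝ)|) ^ (κ + 3) * ‖γa' l r‖ ≤ Ka) →
        (∀ k : ℤ, ∀ r : ℝ, 1 ≤ r →
          r ^ (α + 2) * (1 + |(k:ℝ)|) ^ (κ + 2) * ‖wb k r‖ ≤ Kb) →
        (∀ k : ℤ, ∀ r : ℝ, 1 ≤ r →
          r ^ (α + 3) * (1 + |(k:ℝ)|) ^ (κ + 1) * ‖wb' k r‖ ≤ Kb) →
        ∀ n : ℤ, ∀ r : ℝ, 1 ≤ r →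
          Summable (fun l : ℤ =>
            (l : ℂ) * γa l r * wb' (n - l) r - γa' l r * ((n - l : ℤ) : ℂ) * wb (n - l) r) ∧
          r ^ (4 + 2*α) * (1 + |(n:ℝ)|) ^ (κ + 1) *
            ‖(Complex.I / (r : ℂ)) * ∑' l : ℤ,
              ((l : ℂ) * γa l r * wb' (n - l) r
                - γa' l r * ((n - l : ℤ) : ℂ) * wb (n - l) r)‖
            ≤ C * Ka * Kb := by
  have hsum := summable_one_add_abs_int_rpow_neg one_lt_two
  set S := ∑' l : ℤ, (1 + |(l : ℝ)|) ^ (-2 : ℝ)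
  refine ⟨2 * S, mul_pos two_pos (hsum.tsum_pos (fun _ => by positivity) 0 (by simp)), ?_⟩
  intro γa γa' wb wb' Ka Kb hγa hγa' hwb hwb' n r hr
  have hr0 : 0 < r := one_pos.trans_le hr
  set c := 2 * Ka * Kb / (r ^ (2 * α + 3) * (1 + |(n : ℝ)|) ^ (κ + 1)) with hc
  have hterm : ∀ l : ℤ,
      ‖(l : ℂ) * γa l r * wb' (n - l) r - γa' l r * ((n - l : ℤ) : ℂ) * wb (n - l) r‖ ≤
        c * (1 + |(l : ℝ)|) ^ (-2 : ℝ) := fun l => by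
    simpa only [add_sub_cancel] using norm_nonlinearity_summand_le (by linarith) hr0
      (hγa l r hr) (hγa' l r hr) (hwb (n - l) r hr) (hwb' (n - l) r hr)
  refine ⟨.of_norm_bounded (hsum.mul_left c) hterm, ?_⟩
  have htsum := tsum_of_norm_bounded (hsum.hasSum.mul_left c) hterm
  rw [norm_mul, norm_div, norm_I, norm_real, Real.norm_of_nonneg hr0.le]
  calc _ ≤ r ^ (4 + 2 * α) * (1 + |(n : ℝ)|) ^ (κ + 1) * (1 / r * (c * S)) := by gcongr
    _ = 2 * S * Ka * Kb := by
        rw [show 4 + 2 * α = 1 + (2 * α + 3) by ring, Real.rpow_add hr0, Real.rpow_one, hc]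
        field_simp

/-- Bilinear continuity of the nonlinearity
`F_n(r) = (i/r) Σ_{k+l=n} (l γᵃ_l ∂_r wᵇ_k − ∂_r γᵃ_l k wᵇ_k)`
between the weighted sequence spaces: the defining series converges and
`sup_n sup_{r≥1} r^{4+2α}(1+|n|)^{κ+1}|F_n(r)| ≤ C ‖γᵃ‖ ‖wᵇ‖`. -/
theorem nonlinearity_bilinear_estimate (κ α : ℝ) (hκ : 0 < κ) (hα : 0 < α) :
    ∃ C : ℝ, 0 < C ∧
      ∀ γa γa' wb wb' : ℤ → ℝ → ℂ, ∀ Ka Kb : ℝ,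
        (∀ l : ℤ, ∀ r : ℝ, 1 ≤ r →
          r ^ α * (1 + |(l:ℝ)|) ^ (κ + 4) * ‖γa l r‖ ≤ Ka) →
        (∀ l : ℤ, ∀ r : ℝ, 1 ≤ r →
          r ^ (α + 1) * (1 + |(l:ℝ)|) ^ (κ + 3) * ‖γa' l r‖ ≤ Ka) →
        (∀ k : ℤ, ∀ r : ℝ, 1 ≤ r →
          r ^ (α + 2) * (1 + |(k:ℝ)|) ^ (κ + 2) * ‖wb k r‖ ≤ Kb) →
        (∀ k : ℤ, ∀ r : ℝ, 1 ≤ r →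
          r ^ (α + 3) * (1 + |(k:ℝ)|) ^ (κ + 1) * ‖wb' k r‖ ≤ Kb) →
        ∀ n : ℤ, ∀ r : ℝ, 1 ≤ r →
          Summable (fun l : ℤ =>
            (l : ℂ) * γa l r * wb' (n - l) r - γa' l r * ((n - l : ℤ) : ℂ) * wb (n - l) r) ∧
          r ^ (4 + 2*α) * (1 + |(n:ℝ)|) ^ (κ + 1) *
            ‖(Complex.I / (r : ℂ)) * ∑' l : ℤ,
              ((l : ℂ) * γa l r * wb' (n - l) r
                - γa' l r * ((n - l : ℤ) : ℂ) * wb (n - l) r)‖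
            ≤ C * Ka * Kb :=
  nonlinearity_bilinear_estimate_general κ α hκ
end
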